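/- arXiv:2301.12110 — 8 statements merged into one kernel-verified Lean document; each statement's English description precedes it below -/
import Mathlib

section
/- Let R(x1,y1;x2,y2) be the 4×4 matrix with diagonal entries x1+y2, x2+y2, x1+y1, x2+y1 (rows/columns indexed by (00),(01),(10),(11)), entry y2−y1 in position ((01),(10)), entry x1−x2 in position ((10),(01)), and zeros elsewhere. Then R(x1,y1;x2,y2) · R(x2,y2;x1,y1) = (x1+y2)(x2+y1) · I₄. -/
/-- The classical R-matrix, indexed by (00),(01),(10),(11). -/
def Rmat {R : Type*} [CommRing R] (x1 y1 x2 y2 : R) : Matrix (Fin 4) (Fin 4) R :=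
  !![x1 + y2, 0, 0, 0;
     0, x2 + y2, y2 - y1, 0;
     0, x1 - x2, x1 + y1, 0;
     0, 0, 0, x2 + y1]

/-- `R(x1,y1;x2,y2) · R(x2,y2;x1,y1) = (x1+y2)(x2+y1) · I₄`. -/
theorem Rmat_inverse {R : Type*} [CommRing R] (x1 y1 x2 y2 : R) :
    Rmat x1 y1 x2 y2 * Rmat x2 y2 x1 y1 =
      ((x1 + y2) * (x2 + y1)) • (1 : Matrix (Fin 4) (Fin 4) R) := by
  unfold Rmat
  ext i j
  fin_cases i <;> fin_cases j <;>
    simp [Matrix.mul_apply, Fin.sum_univ_four, Matrix.one_apply, Matrix.vecHead, Matrix.vecTail] <;> ring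
end

section
/- Let R¹(x1,y1;x2,y2) be the 4×4 matrix with diagonal entries x1+y1, x2+y1, x1+y1, x2+y1, entry x1−x2 in position ((10),(01)), and zeros elsewhere. Then R¹(x1,y1;x2,y2) · R¹(x2,y1;x1,y2) = (x1+y1)(x2+y1) · I₄. -/
/-- The five-vertex R-matrix `R¹`, indexed by (00),(01),(10),(11). -/
def R1mat {R : Type*} [CommRing R] (x1 y1 x2 y2 : R) : Matrix (Fin 4) (Fin 4) R :=
  !![x1 + y1, 0, 0, 0;
     0, x2 + y1, 0, 0;
     0, x1 - x2, x1 + y1, 0;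
     0, 0, 0, x2 + y1]

/-- `R¹(x1,y1;x2,y2) · R¹(x2,y1;x1,y2) = (x1+y1)(x2+y1) · I₄`. -/
theorem R1mat_inverse {R : Type*} [CommRing R] (x1 y1 x2 y2 : R) :
    R1mat x1 y1 x2 y2 * R1mat x2 y1 x1 y2 =
      ((x1 + y1) * (x2 + y1)) • (1 : Matrix (Fin 4) (Fin 4) R) := by
  ext i j
  fin_cases i <;> fin_cases j <;> simp [R1mat, Matrix.mul_apply, Fin.sum_univ_four, Matrix.one_apply, Matrix.vecHead, Matrix.vecTail] <;> ring
end

section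
/- Let R²(x1,y1;x2,y2) be the 4×4 matrix with diagonal entries x2+y2, x2+y2, x2+y1, x2+y1, entry y2−y1 in position ((01),(10)), and zeros elsewhere. Then R²(x1,y1;x2,y2) · R²(x1,y2;x2,y1) = (x2+y1)(x2+y2) · I₄. -/
/-- The five-vertex R-matrix `R²`, indexed by (00),(01),(10),(11). -/
def R2mat {R : Type*} [CommRing R] (x1 y1 x2 y2 : R) : Matrix (Fin 4) (Fin 4) R :=
  !![x2 + y2, 0, 0, 0;
     0, x2 + y2, y2 - y1, 0;
     0, 0, x2 + y1, 0;
     0, 0, 0, x2 + y1]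

/-- `R²(x1,y1;x2,y2) · R²(x1,y2;x2,y1) = (x2+y1)(x2+y2) · I₄`. -/
theorem R2mat_inverse {R : Type*} [CommRing R] (x1 y1 x2 y2 : R) :
    R2mat x1 y1 x2 y2 * R2mat x1 y2 x2 y1 =
      ((x2 + y1) * (x2 + y2)) • (1 : Matrix (Fin 4) (Fin 4) R) := by
  unfold R2mat
  ext i j
  fin_cases i <;> fin_cases j <;>
    simp [Matrix.mul_apply, Fin.sum_univ_four, Matrix.one_apply, Matrix.vecHead, Matrix.vecTail] <;> ring
end

section
/- The classical R-matrix factors as a product of the two five-vertex R-matrices: (x2+y2) · R(x1,y1;x2,y2) = R¹(x1,y2;x2,y1) · R²(x1,y1;x2,y2). -/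
/-- Factorization of the classical R-matrix into the two five-vertex R-matrices:
`(x2+y2) · R(x1,y1;x2,y2) = R¹(x1,y2;x2,y1) · R²(x1,y1;x2,y2)`. -/
theorem Rmat_factorization {R : Type*} [CommRing R] (x1 y1 x2 y2 : R) :
    (x2 + y2) • Rmat x1 y1 x2 y2 = R1mat x1 y2 x2 y1 * R2mat x1 y1 x2 y2 := by
  simp only [Rmat, R1mat, R2mat]
  ext i j
  fin_cases i <;> fin_cases j <;> simp [Matrix.mul_apply, Fin.sum_univ_four, Matrix.vecHead, Matrix.vecTail] <;> ring
end

section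
/- Vandermonde-type determinant: for variables x₁,…,xₙ and sequences (aᵢ), (bᵢ), det( (∏_{k=1}^{n−j}(xᵢ − a_k)) / (∏_{k=1}^{n−j+1}(1 − b_k xᵢ)) )_{1≤i,j≤n} = (∏_{1≤i<j≤n} (1 − aᵢ bⱼ)(xᵢ − xⱼ)) / (∏_{i=1}^n ∏_{j=1}^n (1 − bⱼ xᵢ)). -/
/-!
Multiplying row `i` by `∏ₖ (1 - b_k xᵢ)` and reversing the order of rows and columns turns the
matrix into `(g_j(y_i))`, where `g_j = ∏_{k ≤ j} (X - a_k) ∏_{k > j+1} (1 - b_k X)` has degree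
`< n` and `y` is `x` read backwards. So the determinant is the Vandermonde determinant of `y`
(which is `∏_{i<j} (xᵢ - xⱼ)`) times the determinant `D(a, b)` of the coefficient matrix of the
`g_j`, which does not involve `x`. To compute `D`, take `a, b` to be indeterminates over `ℤ` and
substitute `y_i = a_{i+1}`: since `g_j` vanishes at `a_1, …, a_j` the matrix becomes lower
triangular, with diagonal product the Vandermonde determinant of the `a`'s times
`∏_{i<j} (1 - aᵢ bⱼ)`. Cancelling the (nonzero) Vandermonde determinant gives `D`.
-/

open Finset Polynomial

namespace Fin

variable {M : Type*} [CommMonoid M] {n : ℕ}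

theorem prod_Icc_eq_prod_val_add_one (s : Finset (Fin n)) {lo hi : ℕ} (hlo : 1 ≤ lo)
    (hhi : hi ≤ n) (hs : ∀ k : Fin n, k ∈ s ↔ lo ≤ k.val + 1 ∧ k.val + 1 ≤ hi) (u : ℕ → M) :
    ∏ k ∈ Icc lo hi, u k = ∏ k ∈ s, u (k.val + 1) := by
  refine (prod_nbij (fun k : Fin n => k.val + 1) (fun k hk => by simpa [hs] using hk)
    (fun k _ l _ h => Fin.ext (by simpa using h)) (fun k hk => ?_) (fun _ _ => rfl)).symm
  simp only [coe_Icc, Set.mem_Icc] at hk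
  exact ⟨⟨k - 1, by omega⟩, by simp only [mem_coe, hs]; omega, by simp only; omega⟩

theorem prod_filter_fst_lt_snd (f : Fin n → Fin n → M) :
    ∏ p ∈ univ.filter (fun p : Fin n × Fin n => p.1 < p.2), f p.1 p.2 =
      ∏ i, ∏ j ∈ Ioi i, f i j :=
  prod_finset_product' _ _ _ (by simp)

theorem prod_prod_Ioi_rev (f : Fin n → Fin n → M) :
    ∏ i : Fin n, ∏ j ∈ Ioi i, f j.rev i.rev = ∏ i, ∏ j ∈ Ioi i, f i j := by
  rw [← prod_filter_fst_lt_snd, ← prod_filter_fst_lt_snd]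
  exact prod_nbij' (fun p => (p.2.rev, p.1.rev)) (fun p => (p.2.rev, p.1.rev))
    (by simp) (by simp) (by simp) (by simp) (by simp)

theorem prod_Iic_mul_prod_Ioi (m : Fin n) (u : Fin n → M) :
    (∏ k ∈ Iic m, u k) * ∏ k ∈ Ioi m, u k = ∏ k, u k := by
  rw [← prod_filter_mul_prod_filter_not univ (· ≤ m)]
  congr 2 <;> ext <;> simp

end Fin

namespace Matrix

variable {R : Type*} [CommRing R] {n : ℕ}

theorem det_eval_eq_det_vandermonde_mul (v : Fin n → R) (p : Fin n → R[X])
    (hp : ∀ j, (p j).natDegree < n) :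
    (of fun i j => (p j).eval (v i)).det =
      (vandermonde v).det * (of fun i j : Fin n => (p j).coeff i).det := by
  rw [← det_mul]
  congr
  ext i j
  simp [mul_apply, vandermonde_apply, eval_eq_sum_range' (hp j), mul_comm,
    Fin.sum_univ_eq_sum_range fun k => v i ^ k * (p j).coeff k]

theorem det_vandermonde_comp_rev (v : Fin n → R) :
    (vandermonde (v ∘ Fin.rev)).det = ∏ i, ∏ j ∈ Ioi i, (v i - v j) := by
  rw [det_vandermonde]
  exact Fin.prod_prod_Ioi_rev fun i j => v i - v j

end Matrix

namespace VandermondeType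

variable {R S : Type*} [CommRing R] [CommRing S] {n : ℕ} (α β : Fin n → R)

/-- With `α k = a_{k+1}` and `β k = b_{k+1}`, this is the paper's column `n - j` multiplied by
`∏ₖ (1 - b_k X)`. -/
noncomputable def columnPoly (j : Fin n) : R[X] :=
  (∏ k ∈ Iio j, (X - C (α k))) * ∏ k ∈ Ioi j, (1 - C (β k) * X)

theorem natDegree_columnPoly_lt (j : Fin n) : (columnPoly α β j).natDegree < n := by
  have hX : (∏ k ∈ Iio j, (X - C (α k))).natDegree ≤ j.val := by
    refine (natDegree_prod_le _ _).trans ((sum_le_card_nsmul _ _ 1 fun k _ => ?_).trans (by simp))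
    exact natDegree_X_sub_C_le _
  have hB : (∏ k ∈ Ioi j, (1 - C (β k) * X)).natDegree ≤ n - 1 - j := by
    refine (natDegree_prod_le _ _).trans ((sum_le_card_nsmul _ _ 1 fun k _ => ?_).trans (by simp))
    exact (natDegree_sub_le _ _).trans
      (by simpa using (natDegree_C_mul_le (β k) X).trans natDegree_X_le)
  have := j.isLt
  exact (natDegree_mul_le.trans (add_le_add hX hB)).trans_lt (by omega)

theorem map_columnPoly (f : R →+* S) (j : Fin n) :
    (columnPoly α β j).map f = columnPoly (f ∘ α) (f ∘ β) j := by
  simp [columnPoly, Polynomial.map_prod]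

theorem eval_columnPoly_of_lt {i j : Fin n} (h : i < j) : (columnPoly α β j).eval (α i) = 0 := by
  simp only [columnPoly, eval_mul, eval_prod, eval_sub, eval_X, eval_C]
  rw [prod_eq_zero (mem_Iio.2 h) (sub_self _), zero_mul]

theorem eval_columnPoly_self (i : Fin n) :
    (columnPoly α β i).eval (α i) =
      (∏ k ∈ Iio i, (α i - α k)) * ∏ k ∈ Ioi i, (1 - α i * β k) := by
  simp only [columnPoly, eval_mul, eval_prod, eval_sub, eval_one, eval_X, eval_C]
  simp_rw [mul_comm (β _)]

noncomputable def coeffDet : R := (Matrix.of fun i j : Fin n => (columnPoly α β j).coeff i).det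

theorem det_eval_columnPoly (v : Fin n → R) :
    (Matrix.of fun i j => (columnPoly α β j).eval (v i)).det =
      (Matrix.vandermonde v).det * coeffDet α β :=
  Matrix.det_eval_eq_det_vandermonde_mul v _ (natDegree_columnPoly_lt α β)

theorem map_coeffDet (f : R →+* S) : f (coeffDet α β) = coeffDet (f ∘ α) (f ∘ β) := by
  rw [coeffDet, RingHom.map_det]
  congr 1
  ext i j
  simp [← map_columnPoly, coeff_map]

theorem coeffDet_of_injective [IsDomain R] (hα : Function.Injective α) :
    coeffDet α β = ∏ i, ∏ j ∈ Ioi i, (1 - α i * β j) := by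
  refine mul_left_cancel₀ (Matrix.det_vandermonde_ne_zero_iff.2 hα) ?_
  have hlower : (Matrix.of fun i j => (columnPoly α β j).eval (α i)).IsLowerTriangular :=
    fun i j h => eval_columnPoly_of_lt α β h
  rw [← det_eval_columnPoly, Matrix.det_of_isLowerTriangular _ hlower, Matrix.det_vandermonde]
  simp only [Matrix.of_apply, eval_columnPoly_self, prod_mul_distrib]
  congr 1
  exact prod_comm' (by simp)

theorem coeffDet_eq : coeffDet α β = ∏ i, ∏ j ∈ Ioi i, (1 - α i * β j) := by
  -- specialize the case of indeterminates over `ℤ`, where `α` is injective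
  let A : Fin n → MvPolynomial (Fin n ⊕ Fin n) ℤ := fun k => MvPolynomial.X (Sum.inl k)
  let B : Fin n → MvPolynomial (Fin n ⊕ Fin n) ℤ := fun k => MvPolynomial.X (Sum.inr k)
  have hA : Function.Injective A := (MvPolynomial.X_injective).comp Sum.inl_injective
  let f := MvPolynomial.eval₂Hom (Int.castRingHom R) (Sum.elim α β)
  have := congrArg f (coeffDet_of_injective A B hA)
  rw [map_coeffDet] at this
  simpa [f, A, B, Function.comp_def, map_prod] using this

theorem div_prod_Icc_eq_inv_mul_eval_columnPoly {F : Type*} [Field F] {n : ℕ} (a b : ℕ → F)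
    (y : F) (m : Fin n) (hy : ∀ k : Fin n, 1 - b (k.val + 1) * y ≠ 0) :
    (∏ k ∈ Icc 1 (m : ℕ), (y - a k)) / ∏ k ∈ Icc 1 ((m : ℕ) + 1), (1 - b k * y) =
      (∏ k : Fin n, (1 - b (k.val + 1) * y))⁻¹ *
        (columnPoly (fun k => a (k.val + 1)) (fun k => b (k.val + 1)) m).eval y := by
  have hm := m.isLt
  rw [Fin.prod_Icc_eq_prod_val_add_one (Iio m) le_rfl hm.le
      (fun k => by rw [mem_Iio, Fin.lt_def]; omega),
    Fin.prod_Icc_eq_prod_val_add_one (Iic m) le_rfl hm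
      (fun k => by rw [mem_Iic, Fin.le_def]; omega),
    ← Fin.prod_Iic_mul_prod_Ioi m]
  have hT : ∏ k ∈ Ioi m, (1 - b (k.val + 1) * y) ≠ 0 := prod_ne_zero_iff.2 fun k _ => hy k
  simp only [columnPoly, eval_mul, eval_prod, eval_sub, eval_one, eval_X, eval_C]
  rw [mul_inv, mul_mul_mul_comm, inv_mul_cancel₀ hT, mul_one, div_eq_inv_mul]

end VandermondeType

open VandermondeType

/-- Vandermonde-type determinant:
`det( ∏_{k=1}^{n−j}(xᵢ−a_k) / ∏_{k=1}^{n−j+1}(1−b_k xᵢ) )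
 = ∏_{i<j}(1−aᵢbⱼ)(xᵢ−xⱼ) / ∏_{i,j}(1−bⱼxᵢ)`,
in any field where the denominators `1 − b_k xᵢ` are nonzero. Here the entry in row `i`
and column `j` (with `i, j` running over `1,…,n`, represented by `i.val+1`, `j.val+1`)
is `(xᵢ−a₁)⋯(xᵢ−a_{n−j}) / ((1−b₁xᵢ)⋯(1−b_{n−j+1}xᵢ))`. -/
theorem vandermonde_type_det {F : Type*} [Field F] (n : ℕ) (x : Fin n → F) (a b : ℕ → F)
    (hb : ∀ (i : Fin n), ∀ k ∈ Finset.Icc 1 n, 1 - b k * x i ≠ 0) :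
    Matrix.det (Matrix.of fun i j : Fin n =>
        (∏ k ∈ Finset.Icc 1 (n - (j.val + 1)), (x i - a k)) /
        (∏ k ∈ Finset.Icc 1 (n - j.val), (1 - b k * x i))) =
      (∏ p ∈ Finset.univ.filter (fun p : Fin n × Fin n => p.1 < p.2),
          ((1 - a (p.1.val + 1) * b (p.2.val + 1)) * (x p.1 - x p.2))) /
      (∏ i : Fin n, ∏ j : Fin n, (1 - b (j.val + 1) * x i)) := by
  set α : Fin n → F := fun k => a (k.val + 1)
  set β : Fin n → F := fun k => b (k.val + 1)
  set Q : Fin n → F := fun i => ∏ k : Fin n, (1 - b (k.val + 1) * x i)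
  rw [← Matrix.det_submatrix_equiv_self Fin.revPerm]
  calc _ = (Matrix.of fun i j : Fin n =>
          (Q i.rev)⁻¹ * (columnPoly α β j).eval (x i.rev)).det := by
        congr 1
        ext i j
        have hj := j.isLt
        simp only [Matrix.submatrix_apply, Matrix.of_apply, Fin.revPerm_apply, Fin.val_rev]
        rw [show n - (n - (j + 1) + 1) = j by omega, show n - (n - (j + 1)) = j + 1 by omega]
        exact div_prod_Icc_eq_inv_mul_eval_columnPoly a b _ j
          fun k => hb _ _ (mem_Icc.2 ⟨le_add_self, k.isLt⟩)
    _ = (∏ i, Q i)⁻¹ * ((Matrix.vandermonde (x ∘ Fin.rev)).det * coeffDet α β) := by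
        rw [← det_eval_columnPoly, ← prod_inv_distrib,
          ← Equiv.prod_comp Fin.revPerm fun i => (Q i)⁻¹, ← Matrix.det_mul_column]
        rfl
    _ = _ := by
        rw [Matrix.det_vandermonde_comp_rev, coeffDet_eq, Fin.prod_filter_fst_lt_snd
          (fun i j => (1 - a (i.val + 1) * b (j.val + 1)) * (x i - x j))]
        simp only [prod_mul_distrib]
        ring
end

section
/- Rational Vandermonde-type determinant: det( ((xᵢ − a₁)⋯(xᵢ − a_{n−j})) / ((xᵢ − b₁)⋯(xᵢ − b_{n−j+1})) )_{1≤i,j≤n} = (∏_{1≤i<j≤n} (aᵢ − bⱼ)(xᵢ − xⱼ)) / (∏_{i=1}^n ∏_{j=1}^n (xᵢ − bⱼ)). -/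
/-!
Multiplying row `i` by `∏ₖ (xᵢ - bₖ)` turns entry `(i, j)` into `A_{n-1-j}(xᵢ) νⱼ(xᵢ)`, where
`A_r = ∏_{k ≤ r} (X - aₖ)` and `νⱼ = ∏_{k < j} (X - b_{n-k})` is the Newton basis for the
nodes `bₙ, bₙ₋₁, …`. Since `(X - a) νⱼ = νⱼ₊₁ + (b_{n-j} - a) νⱼ`, the polynomial `A_r νⱼ` is a
combination of `νⱼ, νⱼ₊₁, …` whose `νⱼ`-coefficient is `A_r(b_{n-j})`. So the scaled matrix is
`(νₛ(xᵢ)) * U` with `U` triangular, `det (νₛ(xᵢ))` is the Vandermonde determinant, and the diagonal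
of `U` supplies the factors `aᵢ - bⱼ`.
-/

open Finset Matrix Polynomial

namespace Finset

variable {M : Type*} [CommMonoid M]

theorem prod_Icc_one_eq_prod_range (f : ℕ → M) (m : ℕ) :
    ∏ k ∈ Icc 1 m, f k = ∏ k ∈ range m, f (k + 1) := by
  rw [range_eq_Ico, prod_Ico_add', ← Ico_add_one_right_eq_Icc]

theorem prod_Icc_one_eq_mul_prod_range_sub (f : ℕ → M) {n j : ℕ} (h : j ≤ n) :
    ∏ k ∈ Icc 1 n, f k = (∏ k ∈ Icc 1 (n - j), f k) * ∏ k ∈ range j, f (n - k) := by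
  induction j with
  | zero => simp
  | succ j ih =>
    rw [ih (by omega), prod_range_succ, ← mul_assoc, show n - j = n - (j + 1) + 1 by omega,
      prod_Icc_succ_top (by omega), mul_right_comm]

theorem prod_filter_lt_eq_prod_Ioi {ι : Type*} [Fintype ι] [LinearOrder ι]
    [LocallyFiniteOrderTop ι] (f : ι → ι → M) :
    ∏ p ∈ univ.filter (fun p : ι × ι => p.1 < p.2), f p.1 p.2 = ∏ i, ∏ j ∈ Ioi i, f i j := by
  simp_rw [prod_filter, Fintype.prod_prod_type, ← prod_filter, filter_lt_eq_Ioi]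

theorem prod_filter_lt_eq_prod_Iio {ι : Type*} [Fintype ι] [LinearOrder ι]
    [LocallyFiniteOrderBot ι] (f : ι → ι → M) :
    ∏ p ∈ univ.filter (fun p : ι × ι => p.1 < p.2), f p.1 p.2 = ∏ j, ∏ i ∈ Iio j, f i j := by
  simp_rw [prod_filter, Fintype.prod_prod_type_right, ← prod_filter, filter_gt_eq_Iio]

end Finset

theorem Fin.prod_Iio_eq_prod_range {M : Type*} [CommMonoid M] {n : ℕ} (f : ℕ → M) (j : Fin n) :
    ∏ i ∈ Iio j, f i = ∏ k ∈ range j, f k := by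
  rw [← Nat.Iio_eq_range, ← Fin.map_valEmbedding_Iio, prod_map]
  rfl

section NewtonExpansion

variable {R : Type*} [CommRing R] (c a : ℕ → R)

/-- The coefficient of `∏_{k < s} (X - c k)` in the Newton expansion of
`(∏_{k < r} (X - a k)) * ∏_{k < j} (X - c k)`. -/
def newtonCoeff : ℕ → ℕ → ℕ → R
  | 0, j, s => if s = j then 1 else 0
  | r + 1, j, s => newtonCoeff r (j + 1) s + (c j - a r) * newtonCoeff r j s

theorem newtonCoeff_of_lt {s j : ℕ} (h : s < j) : ∀ r, newtonCoeff c a r j s = 0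
  | 0 => if_neg h.ne
  | r + 1 => by
    simp only [newtonCoeff, newtonCoeff_of_lt (h.trans j.lt_succ_self), newtonCoeff_of_lt h,
      mul_zero, add_zero]

theorem newtonCoeff_self (j : ℕ) : ∀ r, newtonCoeff c a r j j = ∏ k ∈ range r, (c j - a k)
  | 0 => if_pos rfl
  | r + 1 => by
    rw [newtonCoeff, newtonCoeff_of_lt c a j.lt_succ_self, newtonCoeff_self j r, prod_range_succ,
      zero_add, mul_comm]

theorem prod_mul_prod_eq_sum_newtonCoeff (t : R) {N : ℕ} :
    ∀ r j, r + j < N → (∏ k ∈ range r, (t - a k)) * ∏ k ∈ range j, (t - c k) =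
      ∑ s ∈ range N, (∏ k ∈ range s, (t - c k)) * newtonCoeff c a r j s
  | 0, j, h => by
    simp [newtonCoeff, show j < N by omega]
  | r + 1, j, h => by
    have hstep : (t - a r) * ∏ k ∈ range j, (t - c k) =
        ∏ k ∈ range (j + 1), (t - c k) + (c j - a r) * ∏ k ∈ range j, (t - c k) := by
      rw [prod_range_succ]; ring
    calc (∏ k ∈ range (r + 1), (t - a k)) * ∏ k ∈ range j, (t - c k)
        = (∏ k ∈ range r, (t - a k)) * ∏ k ∈ range (j + 1), (t - c k) +
            (c j - a r) * ((∏ k ∈ range r, (t - a k)) * ∏ k ∈ range j, (t - c k)) := by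
          rw [prod_range_succ, mul_assoc, hstep]; ring
      _ = ∑ s ∈ range N, (∏ k ∈ range s, (t - c k)) * newtonCoeff c a (r + 1) j s := by
          rw [prod_mul_prod_eq_sum_newtonCoeff t (N := N) r (j + 1) (by omega),
            prod_mul_prod_eq_sum_newtonCoeff t (N := N) r j (by omega), mul_sum,
            ← sum_add_distrib]
          simp only [newtonCoeff]
          exact sum_congr rfl fun s _ => by ring

theorem det_newtonBasis {n : ℕ} (x : Fin n → R) :
    det (of fun i s : Fin n => ∏ k ∈ range s, (x i - c k)) = det (vandermonde x) := by
  nontriviality R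
  rw [det_eval_matrixOfPolynomials_eq_det_vandermonde x
    (fun s => ∏ k ∈ range s, (X - C (c k))) (fun s => by simp)
    (fun s => monic_prod_of_monic _ _ fun k _ => monic_X_sub_C (c k))]
  simp [eval_prod]

theorem det_prod_mul_newtonBasis {n : ℕ} (x : Fin n → R) (r : Fin n → ℕ)
    (hr : ∀ j, r j + j < n) :
    det (of fun i j : Fin n => (∏ k ∈ range (r j), (x i - a k)) * ∏ k ∈ range j, (x i - c k)) =
      (∏ j : Fin n, ∏ k ∈ range (r j), (c j - a k)) * det (vandermonde x) := by
  have hfactor : (of fun i j : Fin n =>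
      (∏ k ∈ range (r j), (x i - a k)) * ∏ k ∈ range j, (x i - c k)) =
        (of fun i s : Fin n => ∏ k ∈ range s, (x i - c k)) *
          of fun s j : Fin n => newtonCoeff c a (r j) j s := by
    ext i j
    rw [of_apply, prod_mul_prod_eq_sum_newtonCoeff c a (x i) (r j) j (hr j), mul_apply,
      ← Fin.sum_univ_eq_sum_range]
    rfl
  rw [hfactor, det_mul, det_newtonBasis,
    det_of_isLowerTriangular (of fun s j : Fin n => newtonCoeff c a (r j) j s)
      fun s j (h : s < j) => newtonCoeff_of_lt c a (Fin.lt_def.mp h) _, mul_comm]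
  simp only [of_apply, newtonCoeff_self]

end NewtonExpansion

theorem div_prod_Icc_eq_inv_prod_Icc_mul {F : Type*} [Field F] (t p : F) (b : ℕ → F) {n j : ℕ}
    (hj : j ≤ n) (hb : ∀ k ∈ Icc 1 n, t ≠ b k) :
    p / ∏ k ∈ Icc 1 (n - j), (t - b k) =
      (∏ k ∈ Icc 1 n, (t - b k))⁻¹ * (p * ∏ k ∈ range j, (t - b (n - k))) := by
  have hν : ∏ k ∈ range j, (t - b (n - k)) ≠ 0 :=
    prod_ne_zero_iff.mpr fun k hk =>
      sub_ne_zero.mpr (hb _ (by simp only [mem_range, mem_Icc] at hk ⊢; omega))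
  rw [prod_Icc_one_eq_mul_prod_range_sub _ hj]
  field_simp

theorem prod_filter_lt_sub_mul_sub_eq {R : Type*} [CommRing R] {n : ℕ} (x : Fin n → R)
    (a b : ℕ → R) :
    ∏ p ∈ univ.filter (fun p : Fin n × Fin n => p.1 < p.2),
        ((a (p.1 + 1) - b (p.2 + 1)) * (x p.1 - x p.2)) =
      (∏ j : Fin n, ∏ k ∈ range (n - (j + 1)), (b (n - j) - a (k + 1))) * det (vandermonde x) := by
  have hdiag : ∏ p ∈ univ.filter (fun p : Fin n × Fin n => p.1 < p.2),
      (b (p.2 + 1) - a (p.1 + 1)) =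
        ∏ j : Fin n, ∏ k ∈ range (n - (j + 1)), (b (n - j) - a (k + 1)) := by
    rw [prod_filter_lt_eq_prod_Iio (fun i j : Fin n => b (j + 1) - a (i + 1)),
      ← Equiv.prod_comp Fin.revPerm]
    refine prod_congr rfl fun j _ => ?_
    rw [Fin.prod_Iio_eq_prod_range (fun i => b (Fin.revPerm j + 1) - a (i + 1)), Fin.revPerm_apply,
      Fin.val_rev, show n - (j + 1) + 1 = n - j by omega]
  rw [det_vandermonde, ← hdiag, ← prod_filter_lt_eq_prod_Ioi (fun i j => x j - x i),
    ← prod_mul_distrib]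
  exact prod_congr rfl fun p _ => by ring

/-- Rational Vandermonde-type determinant:
`det( ∏_{k=1}^{n−j}(xᵢ−a_k) / ∏_{k=1}^{n−j+1}(xᵢ−b_k) )
 = ∏_{i<j}(aᵢ−bⱼ)(xᵢ−xⱼ) / ∏_{i,j}(xᵢ−bⱼ)`,
in any field where `xᵢ ≠ bⱼ` for all relevant `i, j`. -/
theorem rational_vandermonde_type_det {F : Type*} [Field F] (n : ℕ) (x : Fin n → F)
    (a b : ℕ → F)
    (hb : ∀ (i : Fin n), ∀ k ∈ Finset.Icc 1 n, x i ≠ b k) :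
    Matrix.det (Matrix.of fun i j : Fin n =>
        (∏ k ∈ Finset.Icc 1 (n - (j.val + 1)), (x i - a k)) /
        (∏ k ∈ Finset.Icc 1 (n - j.val), (x i - b k))) =
      (∏ p ∈ Finset.univ.filter (fun p : Fin n × Fin n => p.1 < p.2),
          ((a (p.1.val + 1) - b (p.2.val + 1)) * (x p.1 - x p.2))) /
      (∏ i : Fin n, ∏ j : Fin n, (x i - b (j.val + 1))) := by
  set N : Matrix (Fin n) (Fin n) F := of fun i j =>
    (∏ k ∈ range (n - (j + 1)), (x i - a (k + 1))) * ∏ k ∈ range j, (x i - b (n - k)) with hN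
  have hrow : ∀ i j : Fin n,
      (∏ k ∈ Icc 1 (n - (j + 1)), (x i - a k)) / ∏ k ∈ Icc 1 (n - j), (x i - b k) =
        (∏ k : Fin n, (x i - b (k + 1)))⁻¹ * N i j := fun i j => by
    rw [Fin.prod_univ_eq_prod_range (fun k => x i - b (k + 1)),
      ← prod_Icc_one_eq_prod_range (fun k => x i - b k),
      prod_Icc_one_eq_prod_range (fun k => x i - a k), hN, of_apply]
    exact div_prod_Icc_eq_inv_prod_Icc_mul _ _ b j.is_lt.le (hb i)
  simp_rw [hrow]
  rw [det_mul_column, hN, det_prod_mul_newtonBasis (fun k => b (n - k)) (fun k => a (k + 1)) x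
      (fun j => n - (j + 1)) (fun j => by omega), ← prod_filter_lt_sub_mul_sub_eq,
    prod_inv_distrib, div_eq_inv_mul]
end

section
/- Sum of the double factorial geometric progression: ∑_{k=0}^{m} (1 − a_{k+1} b_{k+1}) · ((x|a)^k / (x;b)^{k+1}) · ((z|b)^k / (z;a)^{k+1}) = (1 − ((x|a)^{m+1}/(x;b)^{m+1}) · ((z|b)^{m+1}/(z;a)^{m+1})) / (1 − x z), where (x|a)^k = (x−a₁)(x−a₂)⋯(x−a_k) and (x;b)^k = (1−b₁x)(1−b₂x)⋯(1−b_k x), with (x|a)^0 = (x;b)^0 = 1. -/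
/-!
With `r_k = ((x|a)^k / (x;b)^k) · ((z|b)^k / (z;a)^k)`, the identity
`(1 - b x)(1 - a z) - (x - a)(z - b) = (1 - x z)(1 - a b)` shows that the `k`-th summand times
`1 - x z` is `r_k - r_{k+1}`, so the sum telescopes to `(r_0 - r_{m+1}) / (1 - x z)` with `r_0 = 1`.
-/

open Finset

namespace DoubleFactorialGeometric

variable {F : Type*} [Field F]

/-- `(x|a)^k / (x;b)^k`. -/
def factorialRatio (x : F) (a b : ℕ → F) (k : ℕ) : F :=
  (∏ j ∈ Icc 1 k, (x - a j)) / ∏ j ∈ Icc 1 k, (1 - b j * x)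

@[simp]
lemma factorialRatio_zero (x : F) (a b : ℕ → F) : factorialRatio x a b 0 = 1 := by
  simp [factorialRatio]

lemma factorialRatio_succ (x : F) (a b : ℕ → F) (k : ℕ) :
    factorialRatio x a b (k + 1) =
      factorialRatio x a b k * ((x - a (k + 1)) / (1 - b (k + 1) * x)) := by
  simp only [factorialRatio, prod_Icc_succ_top (Nat.le_add_left 1 k), mul_div_mul_comm]

lemma prod_div_prod_succ_eq_factorialRatio_div (x : F) (a b : ℕ → F) (k : ℕ) :
    (∏ j ∈ Icc 1 k, (x - a j)) / ∏ j ∈ Icc 1 (k + 1), (1 - b j * x) =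
      factorialRatio x a b k / (1 - b (k + 1) * x) := by
  rw [prod_Icc_succ_top (Nat.le_add_left 1 k), ← div_div, factorialRatio]

lemma one_sub_mul_one_sub_sub_sub_mul_sub {R : Type*} [CommRing R] (x z a b : R) :
    (1 - b * x) * (1 - a * z) - (x - a) * (z - b) = (1 - x * z) * (1 - a * b) := by
  ring

lemma one_sub_mul_summand_eq_sub (x z : F) (a b : ℕ → F) (k : ℕ)
    (hb : 1 - b (k + 1) * x ≠ 0) (ha : 1 - a (k + 1) * z ≠ 0) :
    (1 - x * z) * ((1 - a (k + 1) * b (k + 1)) *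
        (factorialRatio x a b k / (1 - b (k + 1) * x)) *
        (factorialRatio z b a k / (1 - a (k + 1) * z))) =
      factorialRatio x a b k * factorialRatio z b a k -
        factorialRatio x a b (k + 1) * factorialRatio z b a (k + 1) := by
  set P := factorialRatio x a b k
  set Q := factorialRatio z b a k
  set u := (1 - b (k + 1) * x)⁻¹
  set v := (1 - a (k + 1) * z)⁻¹
  have hu : (1 - b (k + 1) * x) * u = 1 := mul_inv_cancel₀ hb
  have hv : (1 - a (k + 1) * z) * v = 1 := mul_inv_cancel₀ ha
  rw [factorialRatio_succ, factorialRatio_succ]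
  simp only [div_eq_mul_inv]
  linear_combination
    P * Q * u * v * one_sub_mul_one_sub_sub_sub_mul_sub x z (a (k + 1)) (b (k + 1)) +
      P * Q * (1 - a (k + 1) * z) * v * hu + P * Q * hv

lemma one_sub_mul_sum_eq_one_sub_factorialRatio_mul (x z : F) (a b : ℕ → F) (n : ℕ)
    (hb : ∀ k ∈ Icc 1 n, 1 - b k * x ≠ 0) (ha : ∀ k ∈ Icc 1 n, 1 - a k * z ≠ 0) :
    (1 - x * z) * ∑ k ∈ range n, (1 - a (k + 1) * b (k + 1)) *
        (factorialRatio x a b k / (1 - b (k + 1) * x)) *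
        (factorialRatio z b a k / (1 - a (k + 1) * z)) =
      1 - factorialRatio x a b n * factorialRatio z b a n := by
  have mem : ∀ k ∈ range n, k + 1 ∈ Icc 1 n := fun k hk => by
    simp only [mem_Icc, mem_range] at hk ⊢
    omega
  rw [mul_sum, sum_congr rfl fun k hk =>
      one_sub_mul_summand_eq_sub x z a b k (hb _ (mem k hk)) (ha _ (mem k hk)),
    sum_range_sub' (fun k => factorialRatio x a b k * factorialRatio z b a k)]
  simp

end DoubleFactorialGeometric

open DoubleFactorialGeometric in
/-- Sum of the double factorial geometric progression:
`∑_{k=0}^{m} (1 − a_{k+1}b_{k+1}) (x|a)^k/(x;b)^{k+1} (z|b)^k/(z;a)^{k+1}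
 = (1 − ((x|a)^{m+1}/(x;b)^{m+1})((z|b)^{m+1}/(z;a)^{m+1})) / (1 − xz)`,
where `(x|a)^k = ∏_{j=1}^k (x−a_j)` and `(x;b)^k = ∏_{j=1}^k (1−b_j x)`. -/
theorem double_factorial_geometric_progression {F : Type*} [Field F] (m : ℕ) (x z : F)
    (a b : ℕ → F)
    (hxz : 1 - x * z ≠ 0)
    (hb : ∀ k ∈ Finset.Icc 1 (m + 1), 1 - b k * x ≠ 0)
    (ha : ∀ k ∈ Finset.Icc 1 (m + 1), 1 - a k * z ≠ 0) :
    ∑ k ∈ Finset.range (m + 1),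
        (1 - a (k + 1) * b (k + 1)) *
          ((∏ j ∈ Finset.Icc 1 k, (x - a j)) / (∏ j ∈ Finset.Icc 1 (k + 1), (1 - b j * x))) *
          ((∏ j ∈ Finset.Icc 1 k, (z - b j)) / (∏ j ∈ Finset.Icc 1 (k + 1), (1 - a j * z))) =
      (1 - ((∏ j ∈ Finset.Icc 1 (m + 1), (x - a j)) /
              (∏ j ∈ Finset.Icc 1 (m + 1), (1 - b j * x))) *
            ((∏ j ∈ Finset.Icc 1 (m + 1), (z - b j)) /
              (∏ j ∈ Finset.Icc 1 (m + 1), (1 - a j * z)))) /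
      (1 - x * z) := by
  simp only [prod_div_prod_succ_eq_factorialRatio_div]
  rw [eq_div_iff hxz, mul_comm]
  exact one_sub_mul_sum_eq_one_sub_factorialRatio_mul x z a b (m + 1) hb ha
end

section
/- For a skew diagram λ/μ that is a ribbon (connected, no 2×2 block of boxes) with minimal content k and maximal content K, the integer k belongs to α(μ) \ α(λ) and K+1 belongs to α(λ) \ α(μ), where α(ν) = { νᵢ − i + 1 : i ≥ 1 } for a partition ν (using νᵢ = 0 for i greater than the number of parts). -/
/-- The set of boxes of the skew diagram `λ/μ` (rows indexed from 1):
box `(i,j)` with `1 ≤ i` and `μᵢ < j ≤ λᵢ`. -/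
def skewCells (lam mu : ℕ → ℕ) : Set (ℕ × ℕ) :=
  {p | 1 ≤ p.1 ∧ mu p.1 < p.2 ∧ p.2 ≤ lam p.1}

/-- The content of a box `(i,j)` is `j − i`. -/
def boxContent (p : ℕ × ℕ) : ℤ := (p.2 : ℤ) - (p.1 : ℤ)

/-- Edge-adjacency of boxes. -/
def boxAdjacent (p q : ℕ × ℕ) : Prop :=
  (p.1 = q.1 ∧ (p.2 = q.2 + 1 ∨ q.2 = p.2 + 1)) ∨
  (p.2 = q.2 ∧ (p.1 = q.1 + 1 ∨ q.1 = p.1 + 1))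

/-- `α(ν) = { νᵢ − i + 1 : i ≥ 1 }` as a subset of `ℤ`. -/
def alphaSet (nu : ℕ → ℕ) : Set ℤ :=
  {m | ∃ i : ℕ, 1 ≤ i ∧ m = (nu i : ℤ) - (i : ℤ) + 1}

/-- For a ribbon `λ/μ` with minimal content `k` and maximal content `K`, we have
`k ∈ α(μ) \ α(λ)` and `K+1 ∈ α(λ) \ α(μ)`. -/
theorem ribbon_maya (lam mu : ℕ → ℕ)
    (hlam_anti : ∀ i, 1 ≤ i → lam (i + 1) ≤ lam i)
    (hmu_anti : ∀ i, 1 ≤ i → mu (i + 1) ≤ mu i)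
    (hlam_fin : ∃ N, ∀ i, N ≤ i → lam i = 0)
    (hsub : ∀ i, mu i ≤ lam i)
    (hne : (skewCells lam mu).Nonempty)
    (hconn : ∀ p ∈ skewCells lam mu, ∀ q ∈ skewCells lam mu,
      Relation.ReflTransGen
        (fun u v => u ∈ skewCells lam mu ∧ v ∈ skewCells lam mu ∧ boxAdjacent u v) p q)
    (hno22 : ∀ i j : ℕ, ¬ ((i, j) ∈ skewCells lam mu ∧ (i, j + 1) ∈ skewCells lam mu ∧
      (i + 1, j) ∈ skewCells lam mu ∧ (i + 1, j + 1) ∈ skewCells lam mu))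
    (k K : ℤ)
    (hk : (∃ p ∈ skewCells lam mu, boxContent p = k) ∧
      ∀ p ∈ skewCells lam mu, k ≤ boxContent p)
    (hK : (∃ p ∈ skewCells lam mu, boxContent p = K) ∧
      ∀ p ∈ skewCells lam mu, boxContent p ≤ K) :
    k ∈ alphaSet mu \ alphaSet lam ∧ K + 1 ∈ alphaSet lam \ alphaSet mu := by
  clear hconn hno22 hlam_fin hne
  have mem_skew : ∀ i j : ℕ, ((i, j) ∈ skewCells lam mu) ↔ (1 ≤ i ∧ mu i < j ∧ j ≤ lam i) :=
    fun _ _ => Iff.rfl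
  have bc : ∀ i j : ℕ, boxContent (i, j) = (j : ℤ) - (i : ℤ) := fun _ _ => rfl
  obtain ⟨⟨⟨i0, j0⟩, hp0, hc0⟩, hkmin⟩ := hk
  obtain ⟨⟨⟨i1, j1⟩, hp1, hc1⟩, hKmax⟩ := hK
  rw [mem_skew] at hp0 hp1
  obtain ⟨hi0, hmu0, hla0⟩ := hp0
  obtain ⟨hi1, hmu1, hla1⟩ := hp1
  rw [bc] at hc0 hc1
  have hanti : ∀ (f : ℕ → ℕ), (∀ i, 1 ≤ i → f (i+1) ≤ f i) →
      ∀ a b : ℕ, 1 ≤ a → a ≤ b → f b ≤ f a := by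
    intro f hf a b ha hab
    induction hab with
    | refl => exact le_rfl
    | @step m h ih => exact (hf m (le_trans ha h)).trans ih
  -- The minimal-content box is at the left end of its row.
  have hj0 : j0 = mu i0 + 1 := by
    by_contra h
    have h2 : mu i0 + 1 < j0 := by omega
    have h3 := hkmin (i0, j0 - 1) ((mem_skew _ _).2 ⟨hi0, by omega, by omega⟩)
    rw [bc] at h3
    omega
  -- The maximal-content box is at the right end of its row.
  have hj1 : j1 = lam i1 := by
    by_contra h
    have h2 : j1 + 1 ≤ lam i1 := by omega
    have h3 := hKmax (i1, j1 + 1) ((mem_skew _ _).2 ⟨hi1, by omega, h2⟩)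
    rw [bc] at h3
    omega
  refine ⟨⟨⟨i0, hi0, by omega⟩, ?_⟩, ⟨i1, hi1, by omega⟩, ?_⟩
  · rintro ⟨i, hi, hk'⟩
    rcases lt_or_ge (mu i) (lam i) with h | h
    · have h3 := hkmin (i, lam i) ((mem_skew _ _).2 ⟨hi, h, le_rfl⟩)
      rw [bc] at h3
      omega
    · have heq : lam i = mu i := le_antisymm h (hsub i)
      rcases lt_trichotomy i i0 with h2 | h2 | h2
      · have := hanti mu hmu_anti i i0 hi h2.le
        omega
      · subst h2; omega
      · have := hanti mu hmu_anti i0 i hi0 h2.le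
        omega
  · rintro ⟨i, hi, hk'⟩
    rcases lt_or_ge (mu i) (lam i) with h | h
    · have h3 := hKmax (i, mu i + 1) ((mem_skew _ _).2 ⟨hi, by omega, h⟩)
      rw [bc] at h3
      omega
    · have heq : lam i = mu i := le_antisymm h (hsub i)
      rcases lt_trichotomy i i1 with h2 | h2 | h2
      · have := hanti lam hlam_anti i i1 hi h2.le
        omega
      · subst h2; omega
      · have := hanti lam hlam_anti i1 i hi1 h2.le
        omega
end
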